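/- Let A be a T-brace whose additive group (A,+) is torsion-free. If A is ⋆-hypercentral, then A is abelian, i.e., a ⋆ b = 0 for all a,b ∈ A. -/

import Mathlib

/-!
Basic theory of left braces (skew left braces of abelian type), following
Dixon–Kurdachenko–Subbotin, "On the structure of braces whose subideals are ideals".
-/

universe u v

/-- A left brace: an abelian group `(A,+)`, a group `(A,·)`, satisfying
`a(b+c) = ab + ac - a`.  (The additive and multiplicative identities then coincide.) -/
class LeftBrace (A : Type u) extends AddCommGroup A, Group A where
  mul_add_eq : ∀ a b c : A, a * (b + c) = a * b + a * c - a

namespace LeftBrace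

variable {A : Type u} [LeftBrace A]

/-- The star operation `a ⋆ b = ab - a - b`. -/
def bstar (a b : A) : A := a * b - a - b

/-- A subset of a left brace is a subbrace if it is closed under the additive-group
and multiplicative-group operations (equivalently, it is a left brace under the
restricted operations). -/
structure IsSubbrace (S : Set A) : Prop where
  zero_mem : (0 : A) ∈ S
  add_mem : ∀ {a b : A}, a ∈ S → b ∈ S → a + b ∈ S
  neg_mem : ∀ {a : A}, a ∈ S → -a ∈ S
  mul_mem : ∀ {a b : A}, a ∈ S → b ∈ S → a * b ∈ S
  inv_mem : ∀ {a : A}, a ∈ S → a⁻¹ ∈ S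

/-- `I` is an ideal of the subbrace `J`: `I ⊆ J`, both are subbraces, and
`a ⋆ z, z ⋆ a ∈ I` for all `a ∈ J`, `z ∈ I`. -/
structure IsIdealIn (I J : Set A) : Prop where
  subset : I ⊆ J
  subbrace : IsSubbrace I
  ambient_subbrace : IsSubbrace J
  star_mem_left : ∀ a ∈ J, ∀ z ∈ I, bstar a z ∈ I
  star_mem_right : ∀ a ∈ J, ∀ z ∈ I, bstar z a ∈ I

/-- `I` is an ideal of the brace `A`. -/
def IsIdeal (I : Set A) : Prop := IsIdealIn I (Set.univ : Set A)

/-- `A` is a T-brace if being an ideal is a transitive relation: an ideal of an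
ideal of `A` is an ideal of `A`. -/
def IsTBrace (A : Type u) [LeftBrace A] : Prop :=
  ∀ I J : Set A, IsIdealIn I J → IsIdeal J → IsIdeal I

/-- The `⋆`-center `ζ(⋆,A) = {a | a ⋆ x = x ⋆ a = 0 for all x}`. -/
def starCenter (A : Type u) [LeftBrace A] : Set A :=
  {a : A | ∀ x : A, bstar a x = 0 ∧ bstar x a = 0}

/-- The preimage in `A` of the `⋆`-center of the quotient of `A` by (the ideal) `S`:
`a` belongs to it iff `a ⋆ x ∈ S` and `x ⋆ a ∈ S` for every `x ∈ A`. -/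
def nextCenter (A : Type u) [LeftBrace A] (S : Set A) : Set A :=
  {a : A | ∀ x : A, bstar a x ∈ S ∧ bstar x a ∈ S}

/-- The upper `⋆`-central series, indexed by naturals:
`ζ₀(⋆,A) = 0` and `ζ_{n+1}(⋆,A)/ζ_n(⋆,A) = ζ(⋆, A/ζ_n(⋆,A))`. -/
def zetaNat (A : Type u) [LeftBrace A] : ℕ → Set A
  | 0 => ({0} : Set A)
  | n + 1 => nextCenter A (zetaNat A n)

/-- The upper `⋆`-central series, indexed by ordinals (unions at limit ordinals). -/
noncomputable def zetaOrd (A : Type u) [LeftBrace A] (o : Ordinal.{v}) : Set A :=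
  Ordinal.limitRecOn o (({0} : Set A))
    (fun _ ih => nextCenter A ih)
    (fun o _ ih => ⋃ (o' : Ordinal) (h : o' < o), ih o' h)

/-- The upper `⋆`-hypercenter `ζ_∞(⋆,A)`: the final (stable) term of the upper
`⋆`-central series, i.e. the union of all its terms. -/
noncomputable def starHypercenter (A : Type u) [LeftBrace A] : Set A :=
  ⋃ o : Ordinal.{u}, zetaOrd A o

/-- `A` is `⋆`-hypercentral if `A = ζ_γ(⋆,A)` for some ordinal `γ`. -/
def IsStarHypercentral (A : Type u) [LeftBrace A] : Prop :=
  ∃ γ : Ordinal.{u}, zetaOrd A γ = (Set.univ : Set A)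

/-- `K ⋆ L`: the additive subgroup of `(A,+)` generated by all `x ⋆ y`, `x ∈ K`, `y ∈ L`. -/
def setStar (K L : Set A) : AddSubgroup A :=
  AddSubgroup.closure {z : A | ∃ x ∈ K, ∃ y ∈ L, z = bstar x y}

/-- `rightStarSeries A n = A^{(n+1)}`, where `A^{(1)} = A` and `A^{(n+1)} = A^{(n)} ⋆ A`. -/
def rightStarSeries (A : Type u) [LeftBrace A] : ℕ → Set A
  | 0 => (Set.univ : Set A)
  | n + 1 => ((setStar (rightStarSeries A n) (Set.univ : Set A) : AddSubgroup A) : Set A)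

/-- `leftStarSeries A n = A^{n+1}`, where `A^1 = A` and `A^{n+1} = A ⋆ A^n`. -/
def leftStarSeries (A : Type u) [LeftBrace A] : ℕ → Set A
  | 0 => (Set.univ : Set A)
  | n + 1 => ((setStar (Set.univ : Set A) (leftStarSeries A n) : AddSubgroup A) : Set A)

/-- `A` is Smoktunowicz-nilpotent if `A^{(n)} = A^k = 0` for some naturals `n, k`. -/
def IsSmoktunowiczNilpotent (A : Type u) [LeftBrace A] : Prop :=
  ∃ n k : ℕ, rightStarSeries A n = ({0} : Set A) ∧ leftStarSeries A k = ({0} : Set A)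

/-- The subbrace generated by a subset `M`: the intersection of all subbraces containing `M`. -/
def braceClosure (M : Set A) : Set A := ⋂₀ {S : Set A | IsSubbrace S ∧ M ⊆ S}

end LeftBrace

/-!
Write `Z = ζ(⋆,A)` and `Z₂ ⊇ Z` for the second term of the upper `⋆`-central series. It suffices to
show `Z₂ = Z`, since then every term of the series stays inside `Z`. Both are additive subgroups.
Fix `b ∈ Z₂` and put `c = b ⋆ b ∈ Z`. The additive subgroup `J = ℤb + Z` lies between `Z` and `Z₂`,
so it is an ideal of `A`; all stars of elements of `J` lie in `ℤc`, so `I = ℤb + ℤc` is an ideal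
of `J`. By the T-property `I` is an ideal of `A`, hence `x ⋆ b` and `b ⋆ x` lie in `I ∩ Z`, which
is `ℤc` unless a nonzero multiple of `b`, and then by torsion-freeness `b` itself, lies in `Z`.
Applied to `2b` this gives `2c ∈ ℤ(4c)`, so `c = 0` and `b ∈ Z`.
-/

namespace LeftBrace

variable {A : Type u} [LeftBrace A]

theorem one_eq_zero : (1 : A) = 0 := by
  have h := mul_add_eq (1 : A) 0 0
  simp only [one_mul, add_zero] at h
  rwa [zero_sub, eq_comm, neg_eq_zero] at h

theorem mul_eq_bstar_add_add (a b : A) : a * b = bstar a b + a + b := by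
  unfold bstar
  abel

theorem bstar_add_right (a b c : A) : bstar a (b + c) = bstar a b + bstar a c := by
  unfold bstar
  rw [mul_add_eq]
  abel

def bstarAddHom (a : A) : A →+ A := AddMonoidHom.mk' (bstar a) (bstar_add_right a)

theorem bstar_neg_right (a b : A) : bstar a (-b) = -bstar a b :=
  map_neg (bstarAddHom a) b

theorem bstar_zsmul_right (a b : A) (n : ℤ) : bstar a (n • b) = n • bstar a b :=
  map_zsmul (bstarAddHom a) n b

theorem bstar_zero_left (a : A) : bstar 0 a = 0 := by
  have h : (0 : A) * a = a := by rw [← one_eq_zero, one_mul]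
  rw [bstar, h]
  abel

theorem bstar_mul_left (a b c : A) :
    bstar (a * b) c = bstar a (bstar b c) + bstar b c + bstar a c := by
  have h : a * (b * c) = a * bstar b c + (a * b + a * c - a) - a := by
    rw [mul_eq_bstar_add_add b c, add_assoc, mul_add_eq, mul_add_eq]
  simp only [bstar, mul_assoc, h]
  abel

theorem inv_eq_neg_sub_bstar (u : A) : u⁻¹ = -u - bstar u u⁻¹ := by
  have h := mul_eq_bstar_add_add u u⁻¹
  rw [mul_inv_cancel, one_eq_zero] at h
  rw [eq_sub_iff_add_eq, eq_neg_iff_add_eq_zero, h]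
  abel

theorem zero_mem_starCenter : (0 : A) ∈ starCenter A :=
  fun x => ⟨bstar_zero_left x, map_zero (bstarAddHom x)⟩

theorem mul_eq_add_of_mem_starCenter {s : A} (hs : s ∈ starCenter A) (w : A) :
    s * w = s + w := by
  rw [mul_eq_bstar_add_add, (hs w).1, zero_add]

theorem bstar_mul_left_of_mem_starCenter {s : A} (hs : s ∈ starCenter A) (w x : A) :
    bstar (s * w) x = bstar w x := by
  rw [bstar_mul_left, (hs _).1, (hs x).1, zero_add, add_zero]

theorem bstar_add_left_of_bstar_mem_starCenter {u v : A} (h : bstar u v ∈ starCenter A)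
    (x : A) : bstar (u + v) x = bstar u (bstar v x) + bstar v x + bstar u x := by
  have huv : u * v = bstar u v * (u + v) := by
    rw [mul_eq_add_of_mem_starCenter h, ← add_assoc, mul_eq_bstar_add_add]
  rw [← bstar_mul_left_of_mem_starCenter h (u + v), ← huv, bstar_mul_left]

theorem add_mem_starCenter {z w : A} (hz : z ∈ starCenter A) (hw : w ∈ starCenter A) :
    z + w ∈ starCenter A := by
  intro x
  have hzw : bstar z w ∈ starCenter A := (hz w).1 ▸ zero_mem_starCenter
  constructor
  · rw [bstar_add_left_of_bstar_mem_starCenter hzw, (hw x).1, (hz x).1, (hz 0).1]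
    abel
  · rw [bstar_add_right, (hz x).2, (hw x).2, add_zero]

theorem neg_mem_starCenter {z : A} (hz : z ∈ starCenter A) : -z ∈ starCenter A := by
  intro x
  have hz' : bstar z (-z) ∈ starCenter A := by
    rw [bstar_neg_right, (hz z).1, neg_zero]
    exact zero_mem_starCenter
  have h := bstar_add_left_of_bstar_mem_starCenter hz' x
  rw [add_neg_cancel, bstar_zero_left, (hz _).1, (hz x).1, zero_add, add_zero] at h
  exact ⟨h.symm, by rw [bstar_neg_right, (hz x).2, neg_zero]⟩

variable (A) in
def starCenterAddSubgroup : AddSubgroup A where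
  carrier := starCenter A
  zero_mem' := zero_mem_starCenter
  add_mem' := add_mem_starCenter
  neg_mem' := neg_mem_starCenter

theorem starCenter_subset_nextCenter : starCenter A ⊆ nextCenter A (starCenter A) :=
  fun _ hs x => ⟨(hs x).1 ▸ zero_mem_starCenter, (hs x).2 ▸ zero_mem_starCenter⟩

theorem add_mem_nextCenter {u v : A} (hu : u ∈ nextCenter A (starCenter A))
    (hv : v ∈ nextCenter A (starCenter A)) : u + v ∈ nextCenter A (starCenter A) := by
  intro x
  constructor
  · rw [bstar_add_left_of_bstar_mem_starCenter (hu v).1]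
    exact add_mem_starCenter (add_mem_starCenter (hu _).1 (hv x).1) (hu x).1
  · rw [bstar_add_right]
    exact add_mem_starCenter (hu x).2 (hv x).2

theorem neg_mem_nextCenter {u : A} (hu : u ∈ nextCenter A (starCenter A)) :
    -u ∈ nextCenter A (starCenter A) := by
  intro x
  have hu' : bstar u (-u) ∈ starCenter A := by
    rw [bstar_neg_right]
    exact neg_mem_starCenter (hu u).1
  have h : bstar u (bstar (-u) x) + bstar (-u) x + bstar u x = 0 := by
    rw [← bstar_add_left_of_bstar_mem_starCenter hu', add_neg_cancel, bstar_zero_left]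
  have h' : bstar (-u) x = -bstar u (bstar (-u) x) - bstar u x := by
    rw [eq_sub_iff_add_eq, eq_neg_iff_add_eq_zero, ← h]
    abel
  refine ⟨?_, ?_⟩
  · rw [h', sub_eq_add_neg]
    exact add_mem_starCenter (neg_mem_starCenter (hu _).1) (neg_mem_starCenter (hu x).1)
  · rw [bstar_neg_right]
    exact neg_mem_starCenter (hu x).2

variable (A) in
def nextStarCenterAddSubgroup : AddSubgroup A where
  carrier := nextCenter A (starCenter A)
  zero_mem' := starCenter_subset_nextCenter zero_mem_starCenter
  add_mem' := add_mem_nextCenter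
  neg_mem' := neg_mem_nextCenter

theorem starCenterAddSubgroup_le_nextStarCenterAddSubgroup :
    starCenterAddSubgroup A ≤ nextStarCenterAddSubgroup A :=
  starCenter_subset_nextCenter

theorem bstar_add_left_of_mem_nextCenter {u v : A} (hu : u ∈ nextCenter A (starCenter A))
    (hv : v ∈ nextCenter A (starCenter A)) (x : A) :
    bstar (u + v) x = bstar u x + bstar v x := by
  rw [bstar_add_left_of_bstar_mem_starCenter (hu v).1, ((hv x).1 u).2]
  abel

def bstarRightAddHom (x : A) : nextStarCenterAddSubgroup A →+ A :=
  AddMonoidHom.mk' (fun u => bstar (u : A) x)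
    fun u v => bstar_add_left_of_mem_nextCenter u.2 v.2 x

theorem bstar_zsmul_left_of_mem_nextCenter {u : A} (hu : u ∈ nextCenter A (starCenter A))
    (n : ℤ) (x : A) : bstar (n • u) x = n • bstar u x :=
  map_zsmul (bstarRightAddHom x) n ⟨u, hu⟩

theorem IsSubbrace.univ : IsSubbrace (Set.univ : Set A) :=
  ⟨trivial, fun _ _ => trivial, fun _ => trivial, fun _ _ => trivial, fun _ => trivial⟩

theorem isIdealIn_of_bstar_mem {I : AddSubgroup A} {J : Set A} (hJ : IsSubbrace J)
    (hIJ : (I : Set A) ⊆ J) (h : ∀ a ∈ J, ∀ z ∈ I, bstar a z ∈ I ∧ bstar z a ∈ I) :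
    IsIdealIn (I : Set A) J where
  subset := hIJ
  subbrace :=
    { zero_mem := I.zero_mem
      add_mem := I.add_mem
      neg_mem := I.neg_mem
      mul_mem := fun {u v} hu hv => by
        rw [mul_eq_bstar_add_add]
        exact I.add_mem (I.add_mem (h u (hIJ hu) v hv).1 hu) hv
      inv_mem := fun {u} hu => by
        rw [inv_eq_neg_sub_bstar]
        exact I.sub_mem (I.neg_mem hu) (h _ (hJ.inv_mem (hIJ hu)) u hu).2 }
  ambient_subbrace := hJ
  star_mem_left a ha z hz := (h a ha z hz).1
  star_mem_right a ha z hz := (h a ha z hz).2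

section

open AddSubgroup

theorem bstar_mem_zmultiples_of_mem_sup {b y : A} (hb : b ∈ nextCenter A (starCenter A))
    (hy : y ∈ zmultiples b ⊔ starCenterAddSubgroup A) (x : A) :
    bstar y x ∈ zmultiples (bstar b x) ∧ bstar x y ∈ zmultiples (bstar x b) := by
  obtain ⟨_, hkb, z, hz, rfl⟩ := mem_sup.mp hy
  obtain ⟨k, rfl⟩ := mem_zmultiples_iff.mp hkb
  rw [bstar_add_left_of_mem_nextCenter ((nextStarCenterAddSubgroup A).zsmul_mem hb k)
      (starCenter_subset_nextCenter hz), bstar_zsmul_left_of_mem_nextCenter hb, (hz x).1,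
    add_zero, bstar_add_right, bstar_zsmul_right, (hz x).2, add_zero]
  exact ⟨zsmul_mem_zmultiples _ k, zsmul_mem_zmultiples _ k⟩

theorem bstar_mem_zmultiples_bstar_self {b y y' : A} (hb : b ∈ nextCenter A (starCenter A))
    (hy : y ∈ zmultiples b ⊔ starCenterAddSubgroup A)
    (hy' : y' ∈ zmultiples b ⊔ starCenterAddSubgroup A) :
    bstar y y' ∈ zmultiples (bstar b b) :=
  zmultiples_le_of_mem (bstar_mem_zmultiples_of_mem_sup hb hy' b).2
    (bstar_mem_zmultiples_of_mem_sup hb hy y').1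

theorem mem_starCenter_of_zsmul_mem [IsAddTorsionFree A] {b : A} {n : ℤ}
    (hb : b ∈ nextCenter A (starCenter A)) (hn : n ≠ 0) (h : n • b ∈ starCenter A) :
    b ∈ starCenter A := fun x =>
  ⟨(IsAddTorsionFree.zsmul_eq_zero_iff_right hn).mp <| by
      rw [← bstar_zsmul_left_of_mem_nextCenter hb]
      exact (h x).1,
    (IsAddTorsionFree.zsmul_eq_zero_iff_right hn).mp <| by
      rw [← bstar_zsmul_right]
      exact (h x).2⟩

theorem bstar_mem_zmultiples_bstar_self_of_isTBrace (hT : IsTBrace A) [IsAddTorsionFree A]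
    {b : A} (hb : b ∈ nextCenter A (starCenter A)) (x : A) :
    bstar x b ∈ zmultiples (bstar b b) ∧ bstar b x ∈ zmultiples (bstar b b) := by
  by_cases hbZ : b ∈ starCenter A
  · rw [(hbZ x).1, (hbZ x).2]
    exact ⟨zero_mem _, zero_mem _⟩
  set J := zmultiples b ⊔ starCenterAddSubgroup A
  set I := zmultiples b ⊔ zmultiples (bstar b b)
  have hJ : IsIdeal (J : Set A) := by
    have hJ₂ : J ≤ nextStarCenterAddSubgroup A :=
      sup_le (zmultiples_le_of_mem hb) starCenterAddSubgroup_le_nextStarCenterAddSubgroup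
    refine isIdealIn_of_bstar_mem IsSubbrace.univ (Set.subset_univ _) fun a _ z hz => ?_
    exact ⟨mem_sup_right (hJ₂ hz a).2, mem_sup_right (hJ₂ hz a).1⟩
  have hIJ : I ≤ J := sup_le_sup_left (zmultiples_le_of_mem (hb b).1) _
  have hI : IsIdeal (I : Set A) := by
    refine hT _ _ (isIdealIn_of_bstar_mem hJ.subbrace hIJ fun a ha z hz => ?_) hJ
    exact ⟨mem_sup_right (bstar_mem_zmultiples_bstar_self hb ha (hIJ hz)),
      mem_sup_right (bstar_mem_zmultiples_bstar_self hb (hIJ hz) ha)⟩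
  -- `ℤb` meets `Z` trivially, since `b ∉ Z` and `A` is torsion-free.
  have hIZ : ∀ y ∈ I, y ∈ starCenter A → y ∈ zmultiples (bstar b b) := by
    intro y hy hyZ
    obtain ⟨_, hkb, z, hz, rfl⟩ := mem_sup.mp hy
    obtain ⟨k, rfl⟩ := mem_zmultiples_iff.mp hkb
    have hkZ : k • b ∈ starCenterAddSubgroup A := by
      simpa using (starCenterAddSubgroup A).sub_mem hyZ
        (zmultiples_le_of_mem (H := starCenterAddSubgroup A) (hb b).1 hz)
    obtain rfl : k = 0 := by
      by_contra hk
      exact hbZ (mem_starCenter_of_zsmul_mem hb hk hkZ)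
    simpa using hz
  have hbI : b ∈ I := mem_sup_left (mem_zmultiples b)
  exact ⟨hIZ _ (hI.star_mem_left x trivial b hbI) (hb x).2,
    hIZ _ (hI.star_mem_right x trivial b hbI) (hb x).1⟩

theorem nextCenter_starCenter_subset_starCenter (hT : IsTBrace A) [IsAddTorsionFree A] :
    nextCenter A (starCenter A) ⊆ starCenter A := by
  intro b hb
  have hb2 : (2 : ℤ) • b ∈ nextCenter A (starCenter A) :=
    (nextStarCenterAddSubgroup A).zsmul_mem hb 2
  -- `b ⋆ 2b = 2c` is a multiple of `2b ⋆ 2b = 4c`, where `c = b ⋆ b`.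
  have hc : bstar b b = 0 := by
    obtain ⟨m, hm⟩ := mem_zmultiples_iff.mp
      (bstar_mem_zmultiples_bstar_self_of_isTBrace hT hb2 b).1
    rw [bstar_zsmul_right, bstar_zsmul_left_of_mem_nextCenter hb, bstar_zsmul_right,
      smul_smul, smul_smul, ← sub_eq_zero, ← sub_smul] at hm
    exact (IsAddTorsionFree.zsmul_eq_zero_iff_right (by omega)).mp hm
  intro x
  have h := bstar_mem_zmultiples_bstar_self_of_isTBrace hT hb x
  simp only [hc, zmultiples_zero_eq_bot, mem_bot] at h
  exact h.symm

end

theorem nextCenter_mono {S T : Set A} (h : S ⊆ T) : nextCenter A S ⊆ nextCenter A T :=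
  fun _ ha x => ⟨h (ha x).1, h (ha x).2⟩

theorem zetaOrd_subset_starCenter (hT : IsTBrace A) [IsAddTorsionFree A] (o : Ordinal.{v}) :
    zetaOrd A o ⊆ starCenter A := by
  induction o using Ordinal.limitRecOn with
  | zero =>
    rw [zetaOrd, Ordinal.limitRecOn_zero, Set.singleton_subset_iff]
    exact zero_mem_starCenter
  | add_one o ih =>
    rw [zetaOrd, Ordinal.limitRecOn_add_one]
    exact (nextCenter_mono ih).trans (nextCenter_starCenter_subset_starCenter hT)
  | limit o hlim ih =>
    rw [zetaOrd, Ordinal.limitRecOn_limit _ _ _ _ hlim]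
    exact Set.iUnion₂_subset ih

end LeftBrace

open LeftBrace in
/-- **Corollary 1.** A `⋆`-hypercentral T-brace with torsion-free additive group is abelian. -/
theorem abelian_of_isStarHypercentral_of_torsionFree
    {A : Type u} [LeftBrace A] (hT : IsTBrace A)
    (hfree : ∀ a : A, a ≠ 0 → ¬ IsOfFinAddOrder a)
    (hhc : IsStarHypercentral A) :
    ∀ a b : A, bstar a b = 0 := by
  have : IsAddTorsionFree A := .of_not_isOfFinAddOrder hfree
  obtain ⟨γ, hγ⟩ := hhc
  intro a b
  exact (zetaOrd_subset_starCenter hT γ (hγ ▸ Set.mem_univ a) b).1
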